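/- arXiv:1809.09857 — 4 statements merged into one kernel-verified Lean document; each statement's English description precedes it below -/
import Mathlib

section
/- The map sending a word w with max(w) ≤ n to the linear endomorphism [w,n] of the free module on words, where [w,n](v) = v∘w = v_{w_1}v_{w_2}···v_{w_m} if v has length n and [w,n](v) = 0 otherwise, is injective: [v,m] = [w,n] implies v = w and m = n. -/
/-- Composition of words: `v ∘ w = v_{w₁} v_{w₂} ⋯ v_{w_m}`, where words are
`1`-indexed. -/
def composeWord (v w : List ℕ) : List ℕ := w.map fun i => v.getD (i - 1) 0

/-- The endomorphism `[w, n]` of the free module on words: it sends a basis word `v`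
of length `n` to `v ∘ w`, and every other basis word to `0`. -/
noncomputable def wordOp (w : List ℕ) (n : ℕ) : (List ℕ →₀ ℤ) →ₗ[ℤ] (List ℕ →₀ ℤ) :=
  Finsupp.lsum ℤ fun v => if v.length = n then Finsupp.lsingle (composeWord v w) else 0

lemma wordOp_single (w : List ℕ) (n : ℕ) (u : List ℕ) :
    wordOp w n (Finsupp.single u 1) =
      if u.length = n then Finsupp.single (composeWord u w) 1 else 0 := by
  simp [wordOp]
  split <;> simp

lemma composeWord_range' (v : List ℕ) (n : ℕ) (hv : ∀ a ∈ v, 1 ≤ a ∧ a ≤ n) :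
    composeWord (List.range' 1 n) v = v := by
  unfold composeWord
  conv_rhs => rw [← List.map_id v]
  apply List.map_congr_left
  intro a ha
  obtain ⟨h1, h2⟩ := hv a ha
  have hlt : a - 1 < n := by omega
  rw [List.getD_eq_getElem _ _ (by simpa using hlt)]
  simp [List.getElem_range']
  omega

/-- The map `(w, n) ↦ [w, n]` is injective on pairs of a word `w` with letters in
`{1, ..., n}` and the bound `n`. -/
theorem wordOp_injective (v w : List ℕ) (m n : ℕ)
    (hv : ∀ a ∈ v, 1 ≤ a ∧ a ≤ m) (hw : ∀ a ∈ w, 1 ≤ a ∧ a ≤ n)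
    (h : wordOp v m = wordOp w n) : v = w ∧ m = n := by
  have key : ∀ u : List ℕ,
      (if u.length = m then Finsupp.single (composeWord u v) (1:ℤ) else 0) =
      (if u.length = n then Finsupp.single (composeWord u w) (1:ℤ) else 0) := by
    intro u
    rw [← wordOp_single, ← wordOp_single, h]
  have hmn : m = n := by
    by_contra hne
    have := key (List.replicate m 1)
    simp [hne, Finsupp.single_eq_zero] at this
  subst hmn
  refine ⟨?_, rfl⟩
  have := key (List.range' 1 m)
  simp [composeWord_range' v m hv, composeWord_range' w m hw] at this
  exact Finsupp.single_left_injective one_ne_zero this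
end

section
/- For any permutations π' ∈ S_m and π'' ∈ S_n, and for any word c obtained by shuffling a reduced word a of π' with b↑(m-1) for a reduced word b of π'' (letters of b shifted up by m-1), the word c is itself a reduced word for some permutation in S_{m+n-1}; i.e., c has minimal length among words expressing the corresponding product of simple transpositions. -/
/-- The simple transposition `s_i = (i, i+1)`, acting on `ℕ`; the symmetric groups
`S_n` embed as permutations of `ℕ` fixing `0` and all sufficiently large integers,
with generators `s_1, ..., s_{n-1}`. -/
def simpleRefl (i : ℕ) : Equiv.Perm ℕ := Equiv.swap i (i + 1)

/-- The product `s_{i₁} s_{i₂} ⋯ s_{i_l}` associated to a word `i₁ i₂ ⋯ i_l`. -/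
def wordProd (w : List ℕ) : Equiv.Perm ℕ := (w.map simpleRefl).prod

/-- A word (over the positive integers) is reduced if it has minimal length among
all words over the positive integers with the same product of simple
transpositions. -/
def IsReducedWord (w : List ℕ) : Prop :=
  (∀ i ∈ w, 1 ≤ i) ∧
    ∀ w' : List ℕ, (∀ i ∈ w', 1 ≤ i) → wordProd w' = wordProd w → w.length ≤ w'.length

/-- `Red π` is the set `R(π)` of reduced words for the permutation `π`. -/
def Red (π : Equiv.Perm ℕ) : Set (List ℕ) := {w | IsReducedWord w ∧ wordProd w = π}

/-- The set of inversions of a permutation of `ℕ`. -/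
def InvSet (π : Equiv.Perm ℕ) : Set (ℕ × ℕ) := {p | p.1 < p.2 ∧ π p.2 < π p.1}

/-- The inversion number of a permutation of `ℕ`. -/
noncomputable def plen (π : Equiv.Perm ℕ) : ℕ := (InvSet π).ncard

lemma wordProd_nil : wordProd [] = 1 := rfl

lemma wordProd_cons (i : ℕ) (w : List ℕ) :
    wordProd (i :: w) = simpleRefl i * wordProd w := by
  simp [wordProd]

lemma wordProd_append_singleton (w : List ℕ) (k : ℕ) :
    wordProd (w ++ [k]) = wordProd w * simpleRefl k := by
  simp [wordProd]

lemma swap_lt {k x y : ℕ} (hxy : x < y) (hc : ¬(x = k ∧ y = k + 1)) :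
    Equiv.swap k (k + 1) x < Equiv.swap k (k + 1) y := by
  rw [Equiv.swap_apply_def, Equiv.swap_apply_def]
  split_ifs <;> omega

lemma swap_le {k b x : ℕ} (hk : k + 1 ≤ b) (hx : x ≤ b) :
    Equiv.swap k (k + 1) x ≤ b := by
  rw [Equiv.swap_apply_def]
  split_ifs <;> omega

lemma swap_ge {k b x : ℕ} (hk : b ≤ k) (hx : b ≤ x) :
    b ≤ Equiv.swap k (k + 1) x := by
  rw [Equiv.swap_apply_def]
  split_ifs <;> omega

lemma plen_one : plen 1 = 0 := by
  have : InvSet 1 = ∅ := by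
    ext p; simp [InvSet]; omega
  simp [plen, this]

lemma wordProd_fix {w : List ℕ} {N : ℕ} (h : ∀ i ∈ w, i + 2 ≤ N) :
    ∀ k, N ≤ k → wordProd w k = k := by
  induction w with
  | nil => intro k _; rfl
  | cons i w ih =>
    intro k hk
    rw [wordProd_cons, Equiv.Perm.mul_apply,
      ih (fun j hj => h j (List.mem_cons_of_mem _ hj)) k hk]
    have := h i List.mem_cons_self
    exact Equiv.swap_apply_of_ne_of_ne (by omega) (by omega)

lemma wordProd_fix_zero {w : List ℕ} (h : ∀ i ∈ w, 1 ≤ i) : wordProd w 0 = 0 := by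
  induction w with
  | nil => rfl
  | cons i w ih =>
    rw [wordProd_cons, Equiv.Perm.mul_apply, ih (fun j hj => h j (List.mem_cons_of_mem _ hj))]
    have := h i List.mem_cons_self
    exact Equiv.swap_apply_of_ne_of_ne (by omega) (by omega)

lemma le_foldr_max {w : List ℕ} {i : ℕ} (h : i ∈ w) : i ≤ w.foldr max 0 := by
  induction w with
  | nil => simp at h
  | cons j w ih =>
    rcases List.mem_cons.mp h with rfl | h
    · exact le_max_left _ _
    · exact le_trans (ih h) (le_max_right _ _)

lemma exists_bound (w : List ℕ) : ∃ N, ∀ k, N ≤ k → wordProd w k = k :=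
  ⟨w.foldr max 0 + 2, wordProd_fix (fun i hi => by have := le_foldr_max hi; omega)⟩

lemma invSet_finite_of_fix {π : Equiv.Perm ℕ} {N : ℕ} (h : ∀ k, N ≤ k → π k = k) :
    (InvSet π).Finite := by
  apply Set.Finite.subset ((Set.finite_Iio N).prod (Set.finite_Iio N))
  rintro ⟨x, y⟩ ⟨hxy, hinv⟩
  dsimp only at hxy hinv
  simp only [Set.mem_prod, Set.mem_Iio]
  by_cases hy : y < N
  · constructor
    · by_cases hx : x < N
      · exact hx
      · exfalso
        rw [h x (by omega)] at hinv
        omega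
    · exact hy
  · exfalso
    rw [h y (by omega)] at hinv
    by_cases hx : x < N
    · -- π x > y ≥ N, so π (π x) = π x, hence π x = x < N, contradiction
      have h1 : π (π x) = π x := h (π x) (by omega)
      have h2 : π x = x := π.injective h1
      omega
    · rw [h x (by omega)] at hinv; omega

lemma invSet_wordProd_finite (w : List ℕ) : (InvSet (wordProd w)).Finite := by
  obtain ⟨N, hN⟩ := exists_bound w
  exact invSet_finite_of_fix hN

/-- Multiplying by a simple reflection at an ascent increases the inversion number by one. -/
lemma plen_asc (π : Equiv.Perm ℕ) (i : ℕ) (h1 : (InvSet π).Finite)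
    (h2 : (InvSet (π * simpleRefl i)).Finite) (h : π i < π (i + 1)) :
    plen (π * simpleRefl i) = plen π + 1 := by
  set s : Equiv.Perm ℕ := simpleRefl i with hs
  set p0 : ℕ × ℕ := (i, i + 1) with hp0
  have hss : ∀ x, s (s x) = x := fun x => Equiv.swap_apply_self _ _ _
  have hmem : ∀ x y, (x, y) ∈ InvSet π ↔ x < y ∧ π y < π x := fun x y => Iff.rfl
  have hmem' : ∀ x y, (x, y) ∈ InvSet (π * s) ↔ x < y ∧ π (s y) < π (s x) := by
    intro x y
    simp [InvSet, Equiv.Perm.mul_apply]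
  -- the map on pairs
  set e : ℕ × ℕ → ℕ × ℕ := fun p => (s p.1, s p.2) with he
  have hne : ∀ x y : ℕ, x < y → ¬(x = i ∧ y = i + 1) → s x < s y := fun x y hxy hc =>
    swap_lt hxy hc
  have hmapsTo : ∀ p ∈ InvSet π \ {p0}, e p ∈ InvSet (π * s) \ {p0} := by
    rintro ⟨x, y⟩ ⟨hpmem, hpne⟩
    obtain ⟨hxy, hinv⟩ := hpmem
    dsimp only at hxy hinv
    have hcond : ¬(x = i ∧ y = i + 1) := by
      intro hcc
      exact hpne (by simp [hp0, hcc.1, hcc.2])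
    constructor
    · rw [hmem']
      exact ⟨hne x y hxy hcond, by rw [hss, hss]; exact hinv⟩
    · simp only [Set.mem_singleton_iff, he, hp0]
      intro hcc
      have hx : s x = i := congrArg Prod.fst hcc
      have hy : s y = i + 1 := congrArg Prod.snd hcc
      have hx' : x = s i := by rw [← hx, hss]
      have hy' : y = s (i + 1) := by rw [← hy, hss]
      rw [hs, simpleRefl, Equiv.swap_apply_left] at hx'
      rw [hs, simpleRefl, Equiv.swap_apply_right] at hy'
      omega
  have hmapsTo' : ∀ p ∈ InvSet (π * s) \ {p0}, e p ∈ InvSet π \ {p0} := by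
    rintro ⟨x, y⟩ ⟨hpmem, hpne⟩
    rw [hmem'] at hpmem
    obtain ⟨hxy, hinv⟩ := hpmem
    have hcond : ¬(x = i ∧ y = i + 1) := by
      intro hcc
      exact hpne (by simp [hp0, hcc.1, hcc.2])
    constructor
    · exact ⟨hne x y hxy hcond, hinv⟩
    · simp only [Set.mem_singleton_iff, he, hp0]
      intro hcc
      have hx : s x = i := congrArg Prod.fst hcc
      have hy : s y = i + 1 := congrArg Prod.snd hcc
      have hx' : x = s i := by rw [← hx, hss]
      have hy' : y = s (i + 1) := by rw [← hy, hss]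
      rw [hs, simpleRefl, Equiv.swap_apply_left] at hx'
      rw [hs, simpleRefl, Equiv.swap_apply_right] at hy'
      omega
  have hinj : Function.Injective e := by
    intro p q hpq
    have h1 := congrArg Prod.fst hpq
    have h2 := congrArg Prod.snd hpq
    simp only [he] at h1 h2
    exact Prod.ext (s.injective h1) (s.injective h2)
  have hbij : Set.BijOn e (InvSet π \ {p0}) (InvSet (π * s) \ {p0}) := by
    refine ⟨hmapsTo, hinj.injOn, ?_⟩
    rintro q hq
    refine ⟨e q, hmapsTo' q hq, ?_⟩
    simp only [he]
    exact Prod.ext (hss _) (hss _)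
  have himg : e '' (InvSet π \ {p0}) = InvSet (π * s) \ {p0} := hbij.image_eq
  have hcard : (InvSet (π * s) \ {p0}).ncard = (InvSet π \ {p0}).ncard := by
    rw [← himg, Set.ncard_image_of_injective _ hinj]
  have hp0π : p0 ∉ InvSet π := by
    rw [hp0, hmem]
    omega
  have hp0s : p0 ∈ InvSet (π * s) := by
    rw [hp0, hmem']
    refine ⟨by omega, ?_⟩
    rw [hs, simpleRefl, Equiv.swap_apply_left, Equiv.swap_apply_right]
    exact h
  have hd1 : (InvSet (π * s) \ {p0}).ncard + 1 = (InvSet (π * s)).ncard :=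
    Set.ncard_diff_singleton_add_one hp0s h2
  have hd2 : InvSet π \ {p0} = InvSet π := Set.diff_singleton_eq_self hp0π
  rw [plen, plen, ← hd1, hcard, hd2]
lemma plen_desc (π : Equiv.Perm ℕ) (i : ℕ) (h1 : (InvSet π).Finite)
    (h2 : (InvSet (π * simpleRefl i)).Finite) (h : π (i + 1) < π i) :
    plen (π * simpleRefl i) + 1 = plen π := by
  have hss : (π * simpleRefl i) * simpleRefl i = π := by
    rw [mul_assoc, simpleRefl, Equiv.swap_mul_self, mul_one]
  have hasc : (π * simpleRefl i) i < (π * simpleRefl i) (i + 1) := by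
    rw [Equiv.Perm.mul_apply, Equiv.Perm.mul_apply, simpleRefl,
      Equiv.swap_apply_left, Equiv.swap_apply_right]
    exact h
  have := plen_asc (π * simpleRefl i) i h2 (by rw [hss]; exact h1) hasc
  rw [hss] at this
  omega

lemma plen_le (w : List ℕ) : plen (wordProd w) ≤ w.length := by
  induction w using List.reverseRecOn with
  | nil => rw [wordProd_nil, plen_one]; simp
  | append_singleton w k ih =>
    have hfin1 := invSet_wordProd_finite w
    have hfin2 := invSet_wordProd_finite (w ++ [k])
    rw [wordProd_append_singleton] at hfin2
    rw [wordProd_append_singleton, List.length_append, List.length_singleton]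
    rcases lt_trichotomy (wordProd w k) (wordProd w (k + 1)) with hlt | heq | hgt
    · rw [plen_asc _ _ hfin1 hfin2 hlt]; omega
    · exact absurd ((wordProd w).injective heq) (by omega)
    · have := plen_desc _ _ hfin1 hfin2 hgt; omega

lemma peel (w : List ℕ) (k : ℕ) (h : plen (wordProd (w ++ [k])) = w.length + 1) :
    plen (wordProd w) = w.length ∧ wordProd w k < wordProd w (k + 1) := by
  have hle := plen_le w
  have hfin1 := invSet_wordProd_finite w
  have hfin2 := invSet_wordProd_finite (w ++ [k])
  rw [wordProd_append_singleton] at hfin2 h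
  rcases lt_trichotomy (wordProd w k) (wordProd w (k + 1)) with hlt | heq | hgt
  · have := plen_asc _ _ hfin1 hfin2 hlt
    exact ⟨by omega, hlt⟩
  · exact absurd ((wordProd w).injective heq) (by omega)
  · have := plen_desc _ _ hfin1 hfin2 hgt
    omega

lemma perm_eq_one_of_no_inv {π : Equiv.Perm ℕ} (hfin : (InvSet π).Finite)
    (h : plen π = 0) : π = 1 := by
  have hempty : InvSet π = ∅ := (Set.ncard_eq_zero hfin).mp h
  have hmono : ∀ x y : ℕ, x < y → π x < π y := by
    intro x y hxy
    by_contra hc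
    have : π y < π x := by
      rcases lt_or_eq_of_le (not_lt.mp hc) with h' | h'
      · exact h'
      · exact absurd (π.injective h') (by omega)
    have hmem : (x, y) ∈ InvSet π := ⟨hxy, this⟩
    rw [hempty] at hmem
    exact hmem
  have : ∀ k, π k = k := by
    intro k
    induction k using Nat.strong_induction_on with
    | _ k ih =>
      obtain ⟨j, hj⟩ := π.surjective k
      rcases lt_trichotomy j k with hc | rfl | hc
      · rw [ih j hc] at hj; omega
      · exact hj
      · -- j > k : then π k < π j = k, let t = π k < k, π t = t, injectivity
        have h1 : π k < k := hj ▸ hmono k j hc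
        have h2 : π (π k) = π k := ih (π k) h1
        have := π.injective h2
        omega
  exact Equiv.ext this

lemma exists_word (n : ℕ) : ∀ π : Equiv.Perm ℕ, plen π = n → π 0 = 0 →
    (∃ N, ∀ k, N ≤ k → π k = k) →
    ∃ w : List ℕ, (∀ i ∈ w, 1 ≤ i) ∧ wordProd w = π ∧ w.length = n := by
  induction n with
  | zero =>
    intro π hπ h0 ⟨N, hN⟩
    refine ⟨[], by simp, ?_, rfl⟩
    rw [wordProd_nil, perm_eq_one_of_no_inv (invSet_finite_of_fix hN) hπ]
  | succ n ih =>
    intro π hπ h0 ⟨N, hN⟩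
    have hfin : (InvSet π).Finite := invSet_finite_of_fix hN
    have hne : (InvSet π).Nonempty := by
      rw [Set.nonempty_iff_ne_empty]
      intro hc
      rw [plen, hc, Set.ncard_empty] at hπ
      omega
    have hdesc : ∃ i, π (i + 1) < π i := by
      by_contra hc
      push_neg at hc
      have hmono : StrictMono π := strictMono_nat_of_lt_succ (by
        intro n
        rcases lt_or_eq_of_le (hc n) with h' | h'
        · exact h'
        · exact absurd (π.injective h') (by omega))
      obtain ⟨⟨x, y⟩, hxy, hinv⟩ := hne
      dsimp only at hxy hinv
      exact absurd (hmono hxy) (by omega)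
    obtain ⟨i, hi⟩ := hdesc
    have hipos : 1 ≤ i := by
      rcases Nat.eq_zero_or_pos i with rfl | h
      · rw [h0] at hi; omega
      · exact h
    set π' := π * simpleRefl i with hπ'
    have hfix' : ∀ k, max N (i + 2) ≤ k → π' k = k := by
      intro k hk
      rw [hπ', Equiv.Perm.mul_apply, simpleRefl,
        Equiv.swap_apply_of_ne_of_ne (by omega) (by omega)]
      exact hN k (by omega)
    have hfin' : (InvSet π').Finite := invSet_finite_of_fix hfix'
    have hlen' : plen π' = n := by
      rw [hπ']
      have := plen_desc π i hfin (hπ' ▸ hfin') hi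
      omega
    have h0' : π' 0 = 0 := by
      rw [hπ', Equiv.Perm.mul_apply, simpleRefl,
        Equiv.swap_apply_of_ne_of_ne (by omega) (by omega)]
      exact h0
    obtain ⟨w, hw1, hw2, hw3⟩ := ih π' hlen' h0' ⟨max N (i + 2), hfix'⟩
    refine ⟨w ++ [i], ?_, ?_, by simp [hw3]⟩
    · intro j hj
      rcases List.mem_append.mp hj with h' | h'
      · exact hw1 j h'
      · rw [List.mem_singleton.mp h']; exact hipos
    · rw [wordProd_append_singleton, hw2, hπ', mul_assoc, simpleRefl,
        Equiv.swap_mul_self, mul_one]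

/-- A reduced word has length equal to the inversion number of its product. -/
lemma reduced_plen {w : List ℕ} (hw : IsReducedWord w) : plen (wordProd w) = w.length := by
  have hle := plen_le w
  rcases lt_or_eq_of_le hle with hlt | heq
  · obtain ⟨w', hw1, hw2, hw3⟩ := exists_word (plen (wordProd w)) (wordProd w) rfl
      (wordProd_fix_zero hw.1) (exists_bound w)
    have := hw.2 w' hw1 hw2
    omega
  · exact heq

lemma swap_shift (i M z : ℕ) :
    Equiv.swap (i + M) (i + M + 1) (z + M) = Equiv.swap i (i + 1) z + M := by
  rcases eq_or_ne z i with rfl | h1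
  · rw [Equiv.swap_apply_left, Equiv.swap_apply_left]; omega
  · rcases eq_or_ne z (i + 1) with rfl | h2
    · rw [show i + 1 + M = i + M + 1 by omega, Equiv.swap_apply_right, Equiv.swap_apply_right]
    · rw [Equiv.swap_apply_of_ne_of_ne (by omega) (by omega),
        Equiv.swap_apply_of_ne_of_ne h1 h2]

lemma wordProd_shift (M : ℕ) (w : List ℕ) :
    (∀ x, wordProd (w.map (· + M)) (x + M) = wordProd w x + M) ∧
    (∀ x, x < M → wordProd (w.map (· + M)) x = x) := by
  induction w with
  | nil => exact ⟨fun x => rfl, fun x _ => rfl⟩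
  | cons i w ih =>
    rw [List.map_cons, wordProd_cons, wordProd_cons]
    constructor
    · intro x
      rw [Equiv.Perm.mul_apply, Equiv.Perm.mul_apply, ih.1 x, simpleRefl, simpleRefl,
        swap_shift]
    · intro x hx
      rw [Equiv.Perm.mul_apply, ih.2 x hx, simpleRefl,
        Equiv.swap_apply_of_ne_of_ne (by omega) (by omega)]

lemma plen_shift (M : ℕ) (w : List ℕ) :
    plen (wordProd (w.map (· + M))) = plen (wordProd w) := by
  obtain ⟨hsh, hfix⟩ := wordProd_shift M w
  have himg : InvSet (wordProd (w.map (· + M))) =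
      (fun p : ℕ × ℕ => (p.1 + M, p.2 + M)) '' InvSet (wordProd w) := by
    ext ⟨u, v⟩
    constructor
    · rintro ⟨huv, hinv⟩
      dsimp only at huv hinv
      have hu : M ≤ u := by
        by_contra hu
        rw [hfix u (by omega)] at hinv
        by_cases hv : v < M
        · rw [hfix v hv] at hinv; omega
        · obtain ⟨y, rfl⟩ : ∃ y, v = y + M := ⟨v - M, by omega⟩
          rw [hsh y] at hinv
          omega
      obtain ⟨x, rfl⟩ : ∃ x, u = x + M := ⟨u - M, by omega⟩
      obtain ⟨y, rfl⟩ : ∃ y, v = y + M := ⟨v - M, by omega⟩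
      rw [hsh x, hsh y] at hinv
      exact ⟨(x, y), ⟨show x < y by omega, show wordProd w y < wordProd w x by omega⟩, rfl⟩
    · rintro ⟨⟨x, y⟩, ⟨hxy, hinv⟩, heq⟩
      dsimp only at hxy hinv heq
      obtain ⟨rfl, rfl⟩ : u = x + M ∧ v = y + M := by
        constructor
        · exact (congrArg Prod.fst heq).symm
        · exact (congrArg Prod.snd heq).symm
      exact ⟨show x + M < y + M by omega, show wordProd (w.map (· + M)) (y + M) < wordProd (w.map (· + M)) (x + M) by rw [hsh x, hsh y]; omega⟩
  rw [plen, plen, himg, Set.ncard_image_of_injective]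
  intro p q hpq
  have h1 := congrArg Prod.fst hpq
  have h2 := congrArg Prod.snd hpq
  dsimp only at h1 h2
  exact Prod.ext (by omega) (by omega)

lemma sr_lt {k x y : ℕ} (hxy : x < y) (hc : ¬(x = k ∧ y = k + 1)) :
    simpleRefl k x < simpleRefl k y := swap_lt hxy hc

lemma sr_le {k b x : ℕ} (hk : k + 1 ≤ b) (hx : x ≤ b) : simpleRefl k x ≤ b := swap_le hk hx

lemma sr_ge {k b x : ℕ} (hk : b ≤ k) (hx : b ≤ x) : b ≤ simpleRefl k x := swap_ge hk hx

lemma sr_left (k : ℕ) : simpleRefl k k = k + 1 := Equiv.swap_apply_left _ _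

lemma sr_right (k : ℕ) : simpleRefl k (k + 1) = k := Equiv.swap_apply_right _ _

lemma sr_fix {k x : ℕ} (h1 : x ≠ k) (h2 : x ≠ k + 1) : simpleRefl k x = x :=
  Equiv.swap_apply_of_ne_of_ne h1 h2

/-- The main inductive lemma: a shuffle `d` of a word `a` with letters in `[1, M]`
(actually `[0, M]`) with a word `bu` with letters in `[M+1, ∞)`, both of which have
inversion number equal to their length, again has inversion number equal to its
length; moreover ascents of `a` (in window `[0, M+1]`) and of `bu` (in window
`[M+1, ∞)`) persist in `d`. -/
lemma main_lemma (M : ℕ) (d : List ℕ) : ∀ a bu : List ℕ,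
    plen (wordProd a) = a.length → plen (wordProd bu) = bu.length →
    d.filter (fun i => i ≤ M) = a → d.filter (fun i => M < i) = bu →
    plen (wordProd d) = d.length ∧
      (∀ x y, x < y → y ≤ M + 1 → wordProd a x < wordProd a y →
        wordProd d x < wordProd d y) ∧
      (∀ x y, M + 1 ≤ x → x < y → wordProd bu x < wordProd bu y →
        wordProd d x < wordProd d y) := by
  induction d using List.reverseRecOn with
  | nil =>
    intro a bu _ _ h1 h2
    rw [List.filter_nil] at h1 h2
    subst h1; subst h2
    refine ⟨by rw [wordProd_nil, plen_one]; rfl, ?_, ?_⟩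
    · intro x y _ _ h; exact h
    · intro x y _ _ h; exact h
  | append_singleton d' k ih =>
    intro a bu hpa hpbu h1 h2
    rw [List.filter_append] at h1 h2
    have hw : wordProd (d' ++ [k]) = wordProd d' * simpleRefl k :=
      wordProd_append_singleton d' k
    have hfin1 := invSet_wordProd_finite d'
    have hfin2 : (InvSet (wordProd d' * simpleRefl k)).Finite := by
      have := invSet_wordProd_finite (d' ++ [k]); rwa [hw] at this
    by_cases hk : k ≤ M
    · -- last letter comes from `a`
      rw [show List.filter (fun i => M < i) [k] = [] by
          rw [List.filter_singleton, show decide (M < k) = false from decide_eq_false (by omega)]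
          rfl,
        List.append_nil] at h2
      rw [show List.filter (fun i => i ≤ M) [k] = [k] by
          rw [List.filter_singleton, show decide (k ≤ M) = true from decide_eq_true hk]
          rfl] at h1
      subst h1
      obtain ⟨hpa'', hasc⟩ := peel _ k (by simpa using hpa)
      obtain ⟨IH1, IH2, IH3⟩ := ih _ bu hpa'' hpbu rfl h2
      refine ⟨?_, ?_, ?_⟩
      · rw [hw, List.length_append, List.length_singleton,
          plen_asc _ k hfin1 hfin2 (IH2 k (k + 1) (by omega) (by omega) hasc), IH1]
      · intro x y hxy hyM hPa
        rw [hw, Equiv.Perm.mul_apply, Equiv.Perm.mul_apply]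
        rw [wordProd_append_singleton, Equiv.Perm.mul_apply, Equiv.Perm.mul_apply] at hPa
        by_cases hc : x = k ∧ y = k + 1
        · obtain ⟨rfl, rfl⟩ := hc
          rw [sr_left, sr_right] at hPa
          omega
        · exact IH2 _ _ (sr_lt hxy hc) (sr_le (by omega) hyM) hPa
      · intro x y hx hxy hPbu
        rw [hw, Equiv.Perm.mul_apply, Equiv.Perm.mul_apply]
        by_cases hc : k = M ∧ x = M + 1
        · obtain ⟨rfl, rfl⟩ := hc
          rw [sr_right, sr_fix (by omega) (by omega)]
          exact lt_trans (IH2 k (k + 1) (by omega) (by omega) hasc)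
            (IH3 (k + 1) y (by omega) hxy hPbu)
        · rw [sr_fix (by omega) (by omega), sr_fix (by omega) (by omega)]
          exact IH3 x y hx hxy hPbu
    · -- last letter comes from `bu`
      rw [show List.filter (fun i => i ≤ M) [k] = [] by
          rw [List.filter_singleton, show decide (k ≤ M) = false from decide_eq_false (by omega)]
          rfl,
        List.append_nil] at h1
      rw [show List.filter (fun i => M < i) [k] = [k] by
          rw [List.filter_singleton, show decide (M < k) = true from decide_eq_true (by omega)]
          rfl] at h2
      subst h2
      obtain ⟨hpbu'', hbasc⟩ := peel _ k (by simpa using hpbu)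
      obtain ⟨IH1, IH2, IH3⟩ := ih a _ hpa hpbu'' h1 rfl
      refine ⟨?_, ?_, ?_⟩
      · rw [hw, List.length_append, List.length_singleton,
          plen_asc _ k hfin1 hfin2 (IH3 k (k + 1) (by omega) (by omega) hbasc), IH1]
      · intro x y hxy hyM hPa
        rw [hw, Equiv.Perm.mul_apply, Equiv.Perm.mul_apply]
        by_cases hc : k = M + 1 ∧ y = M + 1
        · obtain ⟨rfl, hy1⟩ := hc
          subst hy1
          rw [sr_left, sr_fix (by omega) (by omega)]
          exact lt_trans (IH2 x (M + 1) hxy (by omega) hPa)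
            (IH3 (M + 1) (M + 2) (by omega) (by omega) hbasc)
        · rw [sr_fix (by omega) (by omega), sr_fix (by omega) (by omega)]
          exact IH2 x y hxy hyM hPa
      · intro x y hx hxy hPbu
        rw [hw, Equiv.Perm.mul_apply, Equiv.Perm.mul_apply]
        rw [wordProd_append_singleton, Equiv.Perm.mul_apply, Equiv.Perm.mul_apply] at hPbu
        by_cases hc : x = k ∧ y = k + 1
        · obtain ⟨rfl, rfl⟩ := hc
          rw [sr_left, sr_right] at hPbu
          omega
        · exact IH3 _ _ (sr_ge (by omega) hx) (sr_lt hxy hc) hPbu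

/-- Any shuffle `c` of a reduced word `a` of a permutation in `S_m` (letters in
`{1, ..., m-1}`) with `b ↑ (m-1)`, for a reduced word `b` of a permutation in `S_n`,
is itself a reduced word: here `c` is a shuffle means that the subword of letters of
`c` in `{1, ..., m-1}` is `a` and the subword of letters `≥ m` is `b ↑ (m-1)`. -/
theorem shuffle_of_reduced_is_reduced (m : ℕ) (a b c : List ℕ)
    (ha : IsReducedWord a) (hb : IsReducedWord b)
    (haM : ∀ i ∈ a, i ≤ m - 1)
    (hc1 : c.filter (fun i => i ≤ m - 1) = a)
    (hc2 : c.filter (fun i => m - 1 < i) = b.map (· + (m - 1))) :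
    IsReducedWord c := by
  have hbu : plen (wordProd (b.map (· + (m - 1)))) = (b.map (· + (m - 1))).length := by
    rw [plen_shift, reduced_plen hb, List.length_map]
  obtain ⟨h1, -, -⟩ :=
    main_lemma (m - 1) c a (b.map (· + (m - 1))) (reduced_plen ha) hbu hc1 hc2
  have hcpos : ∀ i ∈ c, 1 ≤ i := by
    intro i hi
    by_cases h : i ≤ m - 1
    · exact ha.1 i (hc1 ▸ List.mem_filter.mpr ⟨hi, decide_eq_true h⟩)
    · omega
  refine ⟨hcpos, ?_⟩
  intro w' hw' hprod
  have hle := plen_le w'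
  rw [hprod, h1] at hle
  exact hle
end

section
/- A permutation π ∈ S_n is fully commutative (no reduced word contains a consecutive subword of the form i(i+1)i) if and only if π is 321-avoiding, i.e., there are no indices i < j < k with π_i > π_j > π_k. -/
namespace FC321

open Equiv

lemma simpleRefl_apply (i x : ℕ) :
    simpleRefl i x = if x = i then i + 1 else if x = i + 1 then i else x := by
  simp [simpleRefl, Equiv.swap_apply_def]

lemma simpleRefl_mul_self (i : ℕ) : simpleRefl i * simpleRefl i = 1 := by
  simp [simpleRefl]

lemma simpleRefl_simpleRefl (i x : ℕ) : simpleRefl i (simpleRefl i x) = x := by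
  simp [simpleRefl]

lemma simpleRefl_zero {i : ℕ} (hi : 1 ≤ i) : simpleRefl i 0 = 0 := by
  simp only [simpleRefl_apply]; split_ifs <;> (try exact (‹False›).elim) <;> omega

/-- Boundedness of the support of a permutation. -/
def Bdd (σ : Equiv.Perm ℕ) (N : ℕ) : Prop := ∀ i, N < i → σ i = i

lemma Bdd.mono {σ : Perm ℕ} {N M : ℕ} (h : Bdd σ N) (hNM : N ≤ M) : Bdd σ M :=
  fun i hi => h i (lt_of_le_of_lt hNM hi)

lemma Bdd.le_of_le {σ : Perm ℕ} {N : ℕ} (h : Bdd σ N) {i : ℕ} (hi : i ≤ N) : σ i ≤ N := by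
  by_contra hc
  push_neg at hc
  have := h (σ i) hc
  have := σ.injective this
  omega

lemma bdd_simpleRefl (i : ℕ) : Bdd (simpleRefl i) (i + 1) := by
  intro x hx; simp only [simpleRefl_apply]; split_ifs <;> (try exact (‹False›).elim) <;> omega

lemma Bdd.mul {σ τ : Perm ℕ} {N : ℕ} (hσ : Bdd σ N) (hτ : Bdd τ N) : Bdd (σ * τ) N := by
  intro i hi
  rw [Equiv.Perm.mul_apply, hτ i hi, hσ i hi]

lemma wordProd_nil : wordProd [] = 1 := rfl

lemma wordProd_cons (i : ℕ) (w : List ℕ) :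
    wordProd (i :: w) = simpleRefl i * wordProd w := by
  simp [wordProd]

lemma wordProd_append (u v : List ℕ) :
    wordProd (u ++ v) = wordProd u * wordProd v := by
  simp [wordProd]

lemma wordProd_concat (u : List ℕ) (i : ℕ) :
    wordProd (u ++ [i]) = wordProd u * simpleRefl i := by
  rw [wordProd_append]; simp [wordProd]

lemma bdd_wordProd (w : List ℕ) : ∃ N, Bdd (wordProd w) N := by
  induction w with
  | nil => exact ⟨0, fun i _ => rfl⟩
  | cons i t ih =>
    obtain ⟨N, hN⟩ := ih
    exact ⟨max N (i + 1), wordProd_cons i t ▸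
      ((bdd_simpleRefl i).mono (le_max_right _ _)).mul (hN.mono (le_max_left _ _))⟩

lemma wordProd_zero {w : List ℕ} (hw : ∀ i ∈ w, 1 ≤ i) : wordProd w 0 = 0 := by
  induction w with
  | nil => rfl
  | cons i t ih =>
    rw [wordProd_cons, Equiv.Perm.mul_apply, ih (fun j hj => hw j (List.mem_cons_of_mem _ hj)),
      simpleRefl_zero (hw i (List.mem_cons_self))]

/-- Inversions of a permutation. -/
def InvPairs (σ : Equiv.Perm ℕ) : Set (ℕ × ℕ) := {p | p.1 < p.2 ∧ σ p.2 < σ p.1}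

noncomputable def inv (σ : Equiv.Perm ℕ) : ℕ := (InvPairs σ).ncard

lemma invPairs_finite {σ : Perm ℕ} {N : ℕ} (h : Bdd σ N) : (InvPairs σ).Finite := by
  apply Set.Finite.subset ((Set.finite_Iio (N + 1)).prod (Set.finite_Iio (N + 1)))
  rintro ⟨a, b⟩ ⟨h1, h2⟩
  simp only [Set.mem_prod, Set.mem_Iio]
  simp only at h1 h2
  by_contra hc
  have hb : N < b := by
    rcases Nat.lt_or_ge b (N + 1) with hb | hb
    · exfalso; apply hc; exact ⟨by omega, hb⟩
    · omega
  have hσb : σ b = b := h b hb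
  rcases Nat.lt_or_ge N a with ha | ha
  · have := h a ha; omega
  · have := h.le_of_le ha; omega

lemma invPairs_one : InvPairs 1 = ∅ := by
  ext ⟨a, b⟩
  simp only [InvPairs, Set.mem_setOf_eq, Set.mem_empty_iff_false, iff_false, not_and]
  intro h
  simp only [Equiv.Perm.one_apply]
  omega

lemma inv_one : inv 1 = 0 := by simp [inv, invPairs_one]

lemma swap_pair_lt {i a b : ℕ} (hab : a < b) (hx : ¬(a = i ∧ b = i + 1)) :
    simpleRefl i a < simpleRefl i b := by
  rw [simpleRefl_apply, simpleRefl_apply]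
  split_ifs <;> (try exact (‹False›).elim) <;> omega

lemma mem_invPairs_mul {σ : Perm ℕ} {i : ℕ} {p : ℕ × ℕ} (hp : p ∈ InvPairs σ)
    (hne : p ≠ (i, i + 1)) :
    (simpleRefl i p.1, simpleRefl i p.2) ∈ InvPairs (σ * simpleRefl i) ∧
      (simpleRefl i p.1, simpleRefl i p.2) ≠ (i, i + 1) := by
  obtain ⟨h1, h2⟩ := hp
  have hx : ¬(p.1 = i ∧ p.2 = i + 1) := by
    rintro ⟨ha, hb⟩; exact hne (Prod.ext ha hb)
  refine ⟨⟨swap_pair_lt h1 hx, ?_⟩, ?_⟩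
  · simpa only [Equiv.Perm.mul_apply, simpleRefl_simpleRefl] using h2
  · intro hc
    have ha : simpleRefl i p.1 = i := congrArg Prod.fst hc
    have hb : simpleRefl i p.2 = i + 1 := congrArg Prod.snd hc
    rw [simpleRefl_apply] at ha hb
    split_ifs at ha hb <;> omega

lemma invPairs_mul_diff (σ : Perm ℕ) (i : ℕ) :
    InvPairs (σ * simpleRefl i) \ {(i, i + 1)} =
      (fun p : ℕ × ℕ => (simpleRefl i p.1, simpleRefl i p.2)) ''
        (InvPairs σ \ {(i, i + 1)}) := by
  ext p
  constructor
  · rintro ⟨hp, hpx⟩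
    refine ⟨(simpleRefl i p.1, simpleRefl i p.2), ?_, by simp [simpleRefl_simpleRefl]⟩
    have h := mem_invPairs_mul (σ := σ * simpleRefl i) (i := i) hp hpx
    rw [mul_assoc, simpleRefl_mul_self, mul_one] at h
    exact ⟨h.1, h.2⟩
  · rintro ⟨q, ⟨hq, hqx⟩, rfl⟩
    exact ⟨(mem_invPairs_mul hq hqx).1, (mem_invPairs_mul hq hqx).2⟩

lemma swapMap_injective (i : ℕ) :
    Function.Injective (fun p : ℕ × ℕ => (simpleRefl i p.1, simpleRefl i p.2)) := by
  intro p q h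
  have h1 : simpleRefl i p.1 = simpleRefl i q.1 := congrArg Prod.fst h
  have h2 : simpleRefl i p.2 = simpleRefl i q.2 := congrArg Prod.snd h
  exact Prod.ext ((simpleRefl i).injective h1) ((simpleRefl i).injective h2)

lemma invPairs_mul_finite {σ : Perm ℕ} {i : ℕ} (h : (InvPairs σ).Finite) :
    (InvPairs (σ * simpleRefl i)).Finite := by
  have : InvPairs (σ * simpleRefl i) ⊆
      ((fun p : ℕ × ℕ => (simpleRefl i p.1, simpleRefl i p.2)) ''
        (InvPairs σ \ {(i, i + 1)})) ∪ {(i, i + 1)} := by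
    intro p hp
    by_cases hx : p = (i, i + 1)
    · exact Or.inr hx
    · exact Or.inl (by rw [← invPairs_mul_diff]; exact ⟨hp, hx⟩)
  exact Set.Finite.subset (((h.diff).image _).union (Set.finite_singleton _)) this

lemma inv_mul_ascent {σ : Perm ℕ} {i : ℕ} (hfin : (InvPairs σ).Finite)
    (h : σ i < σ (i + 1)) : inv (σ * simpleRefl i) = inv σ + 1 := by
  have h1 : simpleRefl i (i + 1) = i := by
    simp only [simpleRefl_apply]; split_ifs <;> (try exact (‹False›).elim) <;> omega
  have h2 : simpleRefl i i = i + 1 := by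
    simp only [simpleRefl_apply]; split_ifs <;> (try exact (‹False›).elim) <;> omega
  have hxB : (i, i + 1) ∈ InvPairs (σ * simpleRefl i) := by
    refine ⟨by exact Nat.lt_succ_self i, ?_⟩
    show (σ * simpleRefl i) (i + 1) < (σ * simpleRefl i) i
    simp only [Equiv.Perm.mul_apply, h1, h2]
    exact h
  have hxA : (i, i + 1) ∉ InvPairs σ := by
    rintro ⟨-, h2'⟩
    have : σ (i + 1) < σ i := h2'
    omega
  have hfinB : (InvPairs (σ * simpleRefl i)).Finite := invPairs_mul_finite hfin
  have key := invPairs_mul_diff σ i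
  have hAx : InvPairs σ \ {(i, i + 1)} = InvPairs σ := Set.diff_singleton_eq_self hxA
  calc inv (σ * simpleRefl i)
      = (InvPairs (σ * simpleRefl i) \ {(i, i + 1)}).ncard + 1 :=
        (Set.ncard_diff_singleton_add_one hxB hfinB).symm
    _ = ((fun p : ℕ × ℕ => (simpleRefl i p.1, simpleRefl i p.2)) ''
          (InvPairs σ \ {(i, i + 1)})).ncard + 1 := by rw [key]
    _ = (InvPairs σ \ {(i, i + 1)}).ncard + 1 :=
        by rw [Set.ncard_image_of_injective _ (swapMap_injective i)]
    _ = inv σ + 1 := by rw [hAx]; rfl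

lemma inv_mul_descent {σ : Perm ℕ} {i : ℕ} (hfin : (InvPairs σ).Finite)
    (h : σ (i + 1) < σ i) : inv σ = inv (σ * simpleRefl i) + 1 := by
  have hfin' : (InvPairs (σ * simpleRefl i)).Finite := invPairs_mul_finite hfin
  have hasc : (σ * simpleRefl i) i < (σ * simpleRefl i) (i + 1) := by
    simp only [Equiv.Perm.mul_apply]
    have h1 : simpleRefl i (i + 1) = i := by simp only [simpleRefl_apply]; split_ifs <;> (try exact (‹False›).elim) <;> omega
    have h2 : simpleRefl i i = i + 1 := by simp only [simpleRefl_apply]; split_ifs <;> (try exact (‹False›).elim) <;> omega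
    rw [h1, h2]; exact h
  have := inv_mul_ascent hfin' hasc
  rw [mul_assoc, simpleRefl_mul_self, mul_one] at this
  omega

lemma apply_ne_apply_succ (σ : Perm ℕ) (i : ℕ) : σ i ≠ σ (i + 1) := by
  intro h
  have := σ.injective h
  omega

lemma inv_mul_le {σ : Perm ℕ} {i : ℕ} (hfin : (InvPairs σ).Finite) :
    inv (σ * simpleRefl i) ≤ inv σ + 1 := by
  rcases lt_trichotomy (σ i) (σ (i + 1)) with h | h | h
  · rw [inv_mul_ascent hfin h]
  · exact absurd h (apply_ne_apply_succ σ i)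
  · have := inv_mul_descent hfin h; omega

lemma inv_mul_ge {σ : Perm ℕ} {i : ℕ} (hfin : (InvPairs σ).Finite) :
    inv σ ≤ inv (σ * simpleRefl i) + 1 := by
  rcases lt_trichotomy (σ i) (σ (i + 1)) with h | h | h
  · rw [inv_mul_ascent hfin h]; omega
  · exact absurd h (apply_ne_apply_succ σ i)
  · rw [inv_mul_descent hfin h]

lemma invPairs_wordProd_finite (w : List ℕ) : (InvPairs (wordProd w)).Finite := by
  obtain ⟨N, hN⟩ := bdd_wordProd w
  exact invPairs_finite hN

lemma inv_wordProd_le (w : List ℕ) : inv (wordProd w) ≤ w.length := by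
  induction w using List.reverseRecOn with
  | nil => rw [wordProd_nil, inv_one]; simp
  | append_singleton t i ih =>
    rw [wordProd_concat]
    have := inv_mul_le (σ := wordProd t) (i := i) (invPairs_wordProd_finite t)
    simp only [List.length_append, List.length_cons, List.length_nil]
    omega

lemma inv_append_le (x y : List ℕ) :
    inv (wordProd (x ++ y)) ≤ inv (wordProd x) + y.length := by
  induction y using List.reverseRecOn with
  | nil => simp
  | append_singleton t i ih =>
    rw [← List.append_assoc, wordProd_concat]
    have := inv_mul_le (σ := wordProd (x ++ t)) (i := i) (invPairs_wordProd_finite _)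
    simp only [List.length_append, List.length_cons, List.length_nil]
    omega

lemma inv_append_ge (x y : List ℕ) :
    inv (wordProd x) ≤ inv (wordProd (x ++ y)) + y.length := by
  induction y using List.reverseRecOn with
  | nil => simp
  | append_singleton t i ih =>
    rw [← List.append_assoc, wordProd_concat]
    have := inv_mul_ge (σ := wordProd (x ++ t)) (i := i) (invPairs_wordProd_finite _)
    simp only [List.length_append, List.length_cons, List.length_nil]
    omega

lemma inv_prefix {x y : List ℕ}
    (h : inv (wordProd (x ++ y)) = (x ++ y).length) :
    inv (wordProd x) = x.length := by
  have h1 := inv_wordProd_le x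
  have h2 := inv_append_le x y
  simp only [List.length_append] at h
  omega

lemma ascent_of_reduced {x y : List ℕ} {i : ℕ}
    (h : inv (wordProd (x ++ i :: y)) = (x ++ i :: y).length) :
    wordProd x i < wordProd x (i + 1) := by
  have hx : inv (wordProd x) = x.length := inv_prefix h
  have hxi : inv (wordProd (x ++ [i])) = x.length + 1 := by
    have h' : x ++ i :: y = (x ++ [i]) ++ y := by simp
    rw [h'] at h
    have := inv_prefix h
    simpa using this
  rw [wordProd_concat] at hxi
  rcases lt_trichotomy (wordProd x i) (wordProd x (i + 1)) with hlt | heq | hgt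
  · exact hlt
  · exact absurd heq (apply_ne_apply_succ _ i)
  · have := inv_mul_descent (invPairs_wordProd_finite x) hgt
    omega

/-- `σ` contains a 321 pattern. -/
def HasPat (σ : Perm ℕ) : Prop := ∃ a b c : ℕ, a < b ∧ b < c ∧ σ c < σ b ∧ σ b < σ a

lemma hasPat_mul {σ : Perm ℕ} {i a b c : ℕ} (h1 : a < b) (h2 : b < c)
    (h3 : σ c < σ b) (h4 : σ b < σ a)
    (hab : ¬(a = i ∧ b = i + 1)) (hbc : ¬(b = i ∧ c = i + 1)) :
    HasPat (σ * simpleRefl i) := by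
  refine ⟨simpleRefl i a, simpleRefl i b, simpleRefl i c,
    swap_pair_lt h1 hab, swap_pair_lt h2 hbc, ?_, ?_⟩ <;>
    simp only [Equiv.Perm.mul_apply, simpleRefl_simpleRefl]
  · exact h3
  · exact h4

lemma hasPat_mul_of_ascent {σ : Perm ℕ} {i : ℕ} (hasc : σ i < σ (i + 1))
    (hp : HasPat σ) : HasPat (σ * simpleRefl i) := by
  obtain ⟨a, b, c, h1, h2, h3, h4⟩ := hp
  refine hasPat_mul h1 h2 h3 h4 ?_ ?_
  · rintro ⟨rfl, rfl⟩; omega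
  · rintro ⟨rfl, rfl⟩; omega

lemma hasPat_append {x : List ℕ} (y : List ℕ)
    (h : inv (wordProd (x ++ y)) = (x ++ y).length) (hp : HasPat (wordProd x)) :
    HasPat (wordProd (x ++ y)) := by
  induction y using List.reverseRecOn with
  | nil => simpa
  | append_singleton t i ih =>
    rw [← List.append_assoc] at h ⊢
    have h' : inv (wordProd (x ++ t)) = (x ++ t).length := inv_prefix h
    have hp' := ih (by simpa using h')
    have hasc : wordProd (x ++ t) i < wordProd (x ++ t) (i + 1) := by
      apply ascent_of_reduced (y := [])
      simpa using h
    rw [wordProd_concat]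
    exact hasPat_mul_of_ascent hasc hp'

lemma exists_descent_of_inversion {σ : Perm ℕ} {a b : ℕ} (hab : a < b) (h : σ b < σ a) :
    ∃ i, a ≤ i ∧ i < b ∧ σ (i + 1) < σ i := by
  by_contra hc
  push_neg at hc
  have key : ∀ d, a + d ≤ b → σ a ≤ σ (a + d) := by
    intro d
    induction d with
    | zero => intro _; simp
    | succ e ih =>
      intro hd
      have h1 : σ a ≤ σ (a + e) := ih (by omega)
      have h2 := hc (a + e) (by omega) (by omega)
      calc σ a ≤ σ (a + e) := h1
        _ ≤ σ (a + e + 1) := h2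
        _ = σ (a + (e + 1)) := by ring_nf
  have := key (b - a) (by omega)
  rw [show a + (b - a) = b by omega] at this
  omega

lemma eq_one_of_inv_eq_zero {σ : Perm ℕ} (hfin : (InvPairs σ).Finite)
    (h : inv σ = 0) : σ = 1 := by
  have hempty : InvPairs σ = ∅ := by
    rw [← Set.ncard_eq_zero hfin]; exact h
  have hmono : StrictMono σ := by
    intro a b hab
    by_contra hc
    push_neg at hc
    rcases lt_or_eq_of_le hc with hlt | heq
    · have : (a, b) ∈ InvPairs σ := ⟨hab, hlt⟩
      rw [hempty] at this; exact this
    · have := σ.injective heq.symm; omega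
  have hinvmono : StrictMono (σ⁻¹ : Perm ℕ) := by
    intro a b hab
    by_contra hc
    push_neg at hc
    have := hmono.le_iff_le.mpr hc
    simp only [Equiv.Perm.inv_def, Equiv.apply_symm_apply] at this
    omega
  ext x
  have h1 : x ≤ σ x := hmono.le_apply
  have h2 : σ x ≤ σ⁻¹ (σ x) := hinvmono.le_apply
  simp only [Equiv.Perm.inv_def, Equiv.symm_apply_apply] at h2
  simp only [Equiv.Perm.one_apply]
  omega

lemma exists_min_word : ∀ (m : ℕ) (σ : Perm ℕ) (N : ℕ), inv σ = m → σ 0 = 0 → Bdd σ N →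
    ∃ w : List ℕ, (∀ i ∈ w, 1 ≤ i) ∧ wordProd w = σ ∧ w.length = inv σ := by
  intro m
  induction m with
  | zero =>
    intro σ N hm h0 hb
    have := eq_one_of_inv_eq_zero (invPairs_finite hb) hm
    exact ⟨[], by simp, by rw [wordProd_nil, this], by simp [hm]⟩
  | succ m ih =>
    intro σ N hm h0 hb
    have hfin := invPairs_finite hb
    have hne : (InvPairs σ).Nonempty := by
      apply Set.nonempty_of_ncard_ne_zero
      rw [show (InvPairs σ).ncard = inv σ from rfl, hm]
      omega
    obtain ⟨⟨a, b⟩, hab, hinv⟩ := hne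
    obtain ⟨i, hai, hib, hdesc⟩ := exists_descent_of_inversion hab hinv
    have hi1 : 1 ≤ i := by
      by_contra hc
      push_neg at hc
      interval_cases i
      rw [h0] at hdesc
      omega
    set τ := σ * simpleRefl i with hτ
    have hstep : inv σ = inv τ + 1 := inv_mul_descent hfin hdesc
    have hτ0 : τ 0 = 0 := by
      rw [hτ, Equiv.Perm.mul_apply, simpleRefl_zero hi1, h0]
    have hτb : Bdd τ (max N (i + 1)) :=
      (hb.mono (le_max_left _ _)).mul ((bdd_simpleRefl i).mono (le_max_right _ _))
    obtain ⟨w, hw1, hw2, hw3⟩ := ih τ (max N (i + 1)) (by omega) hτ0 hτb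
    refine ⟨w ++ [i], ?_, ?_, ?_⟩
    · intro j hj
      rcases List.mem_append.mp hj with hj | hj
      · exact hw1 j hj
      · simp only [List.mem_singleton] at hj; omega
    · rw [wordProd_concat, hw2, hτ, mul_assoc, simpleRefl_mul_self, mul_one]
    · simp only [List.length_append, List.length_cons, List.length_nil]
      omega

lemma mem_red_iff {w : List ℕ} {π : Perm ℕ} :
    w ∈ Red π ↔ (∀ i ∈ w, 1 ≤ i) ∧ wordProd w = π ∧ w.length = inv π := by
  constructor
  · rintro ⟨⟨hpos, hmin⟩, hprod⟩
    refine ⟨hpos, hprod, ?_⟩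
    obtain ⟨N, hN⟩ := bdd_wordProd w
    obtain ⟨w0, hw01, hw02, hw03⟩ :=
      exists_min_word (inv (wordProd w)) (wordProd w) N rfl (wordProd_zero hpos) hN
    have h1 := hmin w0 hw01 hw02
    have h2 := inv_wordProd_le w
    rw [hprod] at hw03 h2
    omega
  · rintro ⟨hpos, hprod, hlen⟩
    refine ⟨⟨hpos, ?_⟩, hprod⟩
    intro w' hpos' hprod'
    have := inv_wordProd_le w'
    rw [hprod', hprod] at this
    omega

lemma exists_braid_word : ∀ (m : ℕ) (σ : Perm ℕ) (N : ℕ), inv σ = m → σ 0 = 0 → Bdd σ N →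
    HasPat σ → ∃ w ∈ Red σ, ∃ i : ℕ, [i, i + 1, i] <:+: w := by
  intro m
  induction m using Nat.strong_induction_on with
  | _ m ih =>
  intro σ N hm h0 hb hp
  obtain ⟨a, b, c, h1, h2, h3, h4⟩ := hp
  have hfin := invPairs_finite hb
  have ha1 : 1 ≤ a := by
    by_contra hc
    push_neg at hc
    interval_cases a
    omega
  by_cases hcons : b = a + 1 ∧ c = b + 1
  · -- consecutive 321 pattern: build a reduced word ending in the braid
    obtain ⟨hb1, hc1⟩ := hcons
    subst hb1; subst hc1
    have d1 : σ (a + 1) < σ a := h4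
    have e1 : inv σ = inv (σ * simpleRefl a) + 1 := inv_mul_descent hfin d1
    have hfin1 : (InvPairs (σ * simpleRefl a)).Finite := invPairs_mul_finite hfin
    have sa1 : simpleRefl a (a + 1) = a := by simp only [simpleRefl_apply]; split_ifs <;> (try exact (‹False›).elim) <;> omega
    have sa2 : simpleRefl a a = a + 1 := by simp only [simpleRefl_apply]; split_ifs <;> (try exact (‹False›).elim) <;> omega
    have sa3 : simpleRefl a (a + 2) = a + 2 := by simp only [simpleRefl_apply]; split_ifs <;> (try exact (‹False›).elim) <;> omega
    have sb1 : simpleRefl (a + 1) (a + 2) = a + 1 := by simp only [simpleRefl_apply]; split_ifs <;> (try exact (‹False›).elim) <;> omega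
    have sb2 : simpleRefl (a + 1) (a + 1) = a + 2 := by simp only [simpleRefl_apply]; split_ifs <;> (try exact (‹False›).elim) <;> omega
    have sb3 : simpleRefl (a + 1) a = a := by simp only [simpleRefl_apply]; split_ifs <;> (try exact (‹False›).elim) <;> omega
    have hA : a + 1 + 1 = a + 2 := by omega
    rw [hA] at h3
    have d2 : (σ * simpleRefl a) (a + 1 + 1) < (σ * simpleRefl a) (a + 1) := by
      simp only [Equiv.Perm.mul_apply, hA, sa1, sa3]
      omega
    have e2 : inv (σ * simpleRefl a) = inv (σ * simpleRefl a * simpleRefl (a + 1)) + 1 :=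
      inv_mul_descent hfin1 d2
    have hfin2 : (InvPairs (σ * simpleRefl a * simpleRefl (a + 1))).Finite :=
      invPairs_mul_finite hfin1
    have d3 : (σ * simpleRefl a * simpleRefl (a + 1)) (a + 1) <
        (σ * simpleRefl a * simpleRefl (a + 1)) a := by
      simp only [Equiv.Perm.mul_apply, sb2, sa3, sb3, sa2]
      exact h3
    have e3 : inv (σ * simpleRefl a * simpleRefl (a + 1)) =
        inv (σ * simpleRefl a * simpleRefl (a + 1) * simpleRefl a) + 1 :=
      inv_mul_descent hfin2 d3
    set τ := σ * simpleRefl a * simpleRefl (a + 1) * simpleRefl a with hτdef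
    have hτ0 : τ 0 = 0 := by
      rw [hτdef]
      simp only [Equiv.Perm.mul_apply]
      rw [simpleRefl_zero ha1, simpleRefl_zero (by omega), simpleRefl_zero ha1, h0]
    have hτb : Bdd τ (max N (a + 2)) := by
      apply Bdd.mul
      apply Bdd.mul
      apply Bdd.mul
      · exact hb.mono (le_max_left _ _)
      · exact (bdd_simpleRefl a).mono (by omega)
      · exact (bdd_simpleRefl (a + 1)).mono (by omega)
      · exact (bdd_simpleRefl a).mono (by omega)
    obtain ⟨w0, hw01, hw02, hw03⟩ := exists_min_word (inv τ) τ (max N (a + 2)) rfl hτ0 hτb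
    refine ⟨w0 ++ [a, a + 1, a], ?_, a, w0, [], by simp⟩
    rw [mem_red_iff]
    refine ⟨?_, ?_, ?_⟩
    · intro j hj
      rcases List.mem_append.mp hj with hj | hj
      · exact hw01 j hj
      · simp only [List.mem_cons, List.mem_singleton] at hj
        rcases hj with rfl | rfl | rfl | h
        · omega
        · omega
        · omega
        · simp at h
    · have : wordProd [a, a + 1, a] = simpleRefl a * (simpleRefl (a + 1) * simpleRefl a) := by
        simp [wordProd, mul_assoc]
      rw [wordProd_append, hw02, this, hτdef]
      ext x
      simp only [Equiv.Perm.mul_apply, simpleRefl_simpleRefl]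
    · simp only [List.length_append, List.length_cons, List.length_nil]
      omega
  · -- non-consecutive: remove a descent, keep a pattern
    have hstep : ∃ i, 1 ≤ i ∧ σ (i + 1) < σ i ∧ HasPat (σ * simpleRefl i) := by
      by_cases hba : b = a + 1
      · -- then c > b + 1
        have hc1 : b + 1 < c := by
          rcases Nat.lt_or_ge (b + 1) c with h | h
          · exact h
          · exfalso; exact hcons ⟨hba, by omega⟩
        obtain ⟨i, hbi, hic, hdesc⟩ := exists_descent_of_inversion h2 h3
        refine ⟨i, by omega, hdesc, ?_⟩
        apply hasPat_mul h1 h2 h3 h4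
        · rintro ⟨rfl, -⟩; omega
        · rintro ⟨rfl, rfl⟩; omega
      · have hb1 : a + 1 < b := by omega
        obtain ⟨i, hai, hib, hdesc⟩ := exists_descent_of_inversion h1 h4
        refine ⟨i, by omega, hdesc, ?_⟩
        apply hasPat_mul h1 h2 h3 h4
        · rintro ⟨rfl, rfl⟩; omega
        · rintro ⟨rfl, -⟩; omega
    obtain ⟨i, hi1, hdesc, hpat⟩ := hstep
    have hstep' : inv σ = inv (σ * simpleRefl i) + 1 := inv_mul_descent hfin hdesc
    set τ := σ * simpleRefl i with hτdef
    have hτ0 : τ 0 = 0 := by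
      rw [hτdef, Equiv.Perm.mul_apply, simpleRefl_zero hi1, h0]
    have hτb : Bdd τ (max N (i + 1)) :=
      (hb.mono (le_max_left _ _)).mul ((bdd_simpleRefl i).mono (le_max_right _ _))
    obtain ⟨w', hw'red, j, hjinf⟩ :=
      ih (inv τ) (by omega) τ (max N (i + 1)) rfl hτ0 hτb hpat
    rw [mem_red_iff] at hw'red
    obtain ⟨hw1, hw2, hw3⟩ := hw'red
    refine ⟨w' ++ [i], ?_, j, hjinf.trans (List.prefix_append w' [i]).isInfix⟩
    rw [mem_red_iff]
    refine ⟨?_, ?_, ?_⟩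
    · intro k hk
      rcases List.mem_append.mp hk with hk | hk
      · exact hw1 k hk
      · simp only [List.mem_singleton] at hk; omega
    · rw [wordProd_concat, hw2, hτdef, mul_assoc, simpleRefl_mul_self, mul_one]
    · simp only [List.length_append, List.length_cons, List.length_nil]
      omega

lemma hasPat_of_braid {l r : List ℕ} {i : ℕ}
    (h : inv (wordProd (l ++ [i, i + 1, i] ++ r)) = (l ++ [i, i + 1, i] ++ r).length) :
    HasPat (wordProd (l ++ [i, i + 1, i] ++ r)) := by
  have hshape : l ++ [i, i + 1, i] ++ r = l ++ (i :: ((i + 1) :: i :: r)) := by simp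
  have hshape2 : l ++ [i, i + 1, i] ++ r = (l ++ [i]) ++ ((i + 1) :: (i :: r)) := by simp
  have hshape3 : l ++ [i, i + 1, i] ++ r = (l ++ [i, i + 1]) ++ (i :: r) := by simp
  set σ := wordProd l with hσ
  have A1 : σ i < σ (i + 1) := by
    apply ascent_of_reduced (y := (i + 1) :: i :: r)
    rw [← hshape]; exact h
  have A3 : wordProd (l ++ [i, i + 1]) i < wordProd (l ++ [i, i + 1]) (i + 1) := by
    apply ascent_of_reduced (y := r)
    rw [← hshape3]; exact h
  have hw2 : wordProd (l ++ [i, i + 1]) = σ * simpleRefl i * simpleRefl (i + 1) := by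
    rw [show l ++ [i, i + 1] = (l ++ [i]) ++ [i + 1] by simp, wordProd_concat, wordProd_concat]
  have sa1 : simpleRefl i (i + 1) = i := by simp only [simpleRefl_apply]; split_ifs <;> (try exact (‹False›).elim) <;> omega
  have sa2 : simpleRefl i i = i + 1 := by simp only [simpleRefl_apply]; split_ifs <;> (try exact (‹False›).elim) <;> omega
  have sa3 : simpleRefl i (i + 2) = i + 2 := by simp only [simpleRefl_apply]; split_ifs <;> (try exact (‹False›).elim) <;> omega
  have sb1 : simpleRefl (i + 1) (i + 2) = i + 1 := by simp only [simpleRefl_apply]; split_ifs <;> (try exact (‹False›).elim) <;> omega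
  have sb2 : simpleRefl (i + 1) (i + 1) = i + 2 := by simp only [simpleRefl_apply]; split_ifs <;> (try exact (‹False›).elim) <;> omega
  have sb3 : simpleRefl (i + 1) i = i := by simp only [simpleRefl_apply]; split_ifs <;> (try exact (‹False›).elim) <;> omega
  have A3' : σ (i + 1) < σ (i + 2) := by
    rw [hw2] at A3
    simp only [Equiv.Perm.mul_apply, sb3, sa2, sb2, sa3] at A3
    exact A3
  -- the product of the prefix ending with the braid has a consecutive 321 pattern
  have hbraidprod : wordProd (l ++ [i, i + 1, i]) =
      σ * simpleRefl i * simpleRefl (i + 1) * simpleRefl i := by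
    rw [show l ++ [i, i + 1, i] = ((l ++ [i]) ++ [i + 1]) ++ [i] by simp,
      wordProd_concat, wordProd_concat, wordProd_concat]
  have hpat : HasPat (wordProd (l ++ [i, i + 1, i])) := by
    rw [hbraidprod]
    refine ⟨i, i + 1, i + 2, by omega, by omega, ?_, ?_⟩ <;>
      simp only [Equiv.Perm.mul_apply, sa1, sa2, sa3, sb1, sb2, sb3]
    · exact A1
    · exact A3'
  exact hasPat_append r h hpat

end FC321

/-- A permutation `π ∈ S_n` (a permutation of `ℕ` fixing `0` and all `i > n`) is
fully commutative — no reduced word contains a consecutive subword `i (i+1) i` —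
if and only if `π` is `321`-avoiding: there are no `1 ≤ i < j < k ≤ n` with
`π i > π j > π k`. -/
theorem fully_commutative_iff_321_avoiding (n : ℕ) (π : Equiv.Perm ℕ)
    (hπ : ∀ i : ℕ, i = 0 ∨ n < i → π i = i) :
    (∀ w ∈ Red π, ∀ i : ℕ, ¬ [i, i + 1, i] <:+: w) ↔
      ¬ ∃ i j k : ℕ, 1 ≤ i ∧ i < j ∧ j < k ∧ k ≤ n ∧ π k < π j ∧ π j < π i := by
  open FC321 in
  constructor
  · intro hFC
    rintro ⟨i, j, k, hi1, hij, hjk, hkn, hkj, hji⟩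
    have h0 : π 0 = 0 := hπ 0 (Or.inl rfl)
    have hb : Bdd π n := fun i hi => hπ i (Or.inr hi)
    obtain ⟨w, hw, i', hinf⟩ :=
      exists_braid_word (inv π) π n rfl h0 hb ⟨i, j, k, hij, hjk, hkj, hji⟩
    exact hFC w hw i' hinf
  · intro hAvoid w hw i hinf
    rw [FC321.mem_red_iff] at hw
    obtain ⟨hpos, hprod, hlen⟩ := hw
    obtain ⟨s, t, hst⟩ := hinf
    have hw_eq : w = s ++ [i, i + 1, i] ++ t := hst.symm
    subst hw_eq
    have hred : inv (wordProd (s ++ [i, i + 1, i] ++ t)) =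
        (s ++ [i, i + 1, i] ++ t).length := by rw [hprod, ← hlen]
    have hpat := hasPat_of_braid hred
    rw [hprod] at hpat
    obtain ⟨a, b, c, h1, h2, h3, h4⟩ := hpat
    apply hAvoid
    have ha1 : 1 ≤ a := by
      by_contra hc
      push_neg at hc
      interval_cases a
      rw [hπ 0 (Or.inl rfl)] at h4
      omega
    have hcn : c ≤ n := by
      by_contra hc
      push_neg at hc
      have hπc : π c = c := hπ c (Or.inr hc)
      have hbn : b ≤ n := by
        by_contra hb'
        push_neg at hb'
        have := hπ b (Or.inr hb')
        omega
      have hπbn : π b ≤ n := by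
        by_contra hb'
        push_neg at hb'
        have := hπ (π b) (Or.inr hb')
        have := π.injective this
        omega
      omega
    exact ⟨a, b, c, ha1, h1, h2, hcn, h3, h4⟩
end

section
/- For compositions α, β of n with α a peak composition, one has I(α) ⊆ I(β) ∪ (I(β)+1) if and only if I(α♭) ⊆ I(β^r) ∪ (I(β^r)+1), where α♭ = (α_l + 1, α_{l-1}, ..., α_2, α_1 − 1) for α = (α_1,...,α_l), and β^r is the reversal of β. -/
/-- The set `I(α) = {α₁, α₁+α₂, ..., α₁+⋯+α_{l-1}}` of partial sums (omitting the
total sum) of a composition `α`, as a `Finset` of natural numbers. -/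
def compSet (l : List ℕ) : Finset ℕ :=
  Finset.image (fun i => (l.take (i + 1)).sum) (Finset.range (l.length - 1))

/-- Increment the first entry of a list by `1`. -/
def incHead : List ℕ → List ℕ
  | [] => []
  | a :: t => (a + 1) :: t

/-- Decrement the last entry of a list by `1`. -/
def decLast (l : List ℕ) : List ℕ :=
  match l.reverse with
  | [] => []
  | a :: t => t.reverse ++ [a - 1]

/-- The composition `α♭ = (α_l + 1, α_{l-1}, ..., α₂, α₁ - 1)`, with a zero final
part dropped. -/
def flatComp (l : List ℕ) : List ℕ := (decLast (incHead l.reverse)).filter fun a => 0 < a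

lemma mem_compSet {l : List ℕ} {s : ℕ} :
    s ∈ compSet l ↔ ∃ i, i < l.length - 1 ∧ (l.take (i+1)).sum = s := by
  simp [compSet]

lemma compSet_bounds {l : List ℕ} (hpos : ∀ a ∈ l, 0 < a) {s : ℕ}
    (hs : s ∈ compSet l) : 0 < s ∧ s < l.sum := by
  rw [mem_compSet] at hs
  obtain ⟨i, hi, rfl⟩ := hs
  constructor
  · apply List.sum_pos
    · intro a ha; exact hpos a (List.mem_of_mem_take ha)
    · intro h
      have := congrArg List.length h
      simp only [List.length_take, List.length_nil] at this
      omega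
  · have h1 : (l.take (i+1)).sum + (l.drop (i+1)).sum = l.sum := by
      rw [← List.sum_append, List.take_append_drop]
    have h2 : 0 < (l.drop (i+1)).sum := by
      apply List.sum_pos
      · intro a ha; exact hpos a (List.mem_of_mem_drop ha)
      · intro h
        have := congrArg List.length h
        simp only [List.length_drop, List.length_nil] at this
        omega
    omega

lemma take_reverse_sum (l : List ℕ) (k : ℕ) (hk : k ≤ l.length) :
    (l.reverse.take k).sum = l.sum - (l.take (l.length - k)).sum := by
  have h : l.reverse.take k = (l.drop (l.length - k)).reverse := by
    conv_lhs => rw [← List.take_append_drop (l.length - k) l]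
    rw [List.reverse_append]
    rw [List.take_left']
    simp [List.length_drop]
    omega
  rw [h, List.sum_reverse]
  have h1 : (l.take (l.length - k)).sum + (l.drop (l.length - k)).sum = l.sum := by
    rw [← List.sum_append, List.take_append_drop]
  omega

lemma compSet_reverse (l : List ℕ) :
    compSet l.reverse = (compSet l).image (fun s => l.sum - s) := by
  ext s
  simp only [mem_compSet, Finset.mem_image, List.length_reverse]
  constructor
  · rintro ⟨i, hi, rfl⟩
    refine ⟨(l.take (l.length - (i+1))).sum, ⟨l.length - i - 2, by omega, ?_⟩,
      (take_reverse_sum l (i+1) (by omega)).symm⟩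
    congr 2
    omega
  · rintro ⟨a, ⟨j, hj, rfl⟩, rfl⟩
    refine ⟨l.length - j - 2, by omega, ?_⟩
    rw [take_reverse_sum l _ (by omega)]
    have : l.length - (l.length - j - 2 + 1) = j + 1 := by omega
    rw [this]

lemma compSet_incHead (m : List ℕ) (hm : m ≠ []) :
    compSet (incHead m) = (compSet m).image (· + 1) := by
  obtain ⟨a, t, rfl⟩ := List.exists_cons_of_ne_nil hm
  have key : ∀ i : ℕ, ((incHead (a :: t)).take (i+1)).sum = ((a::t).take (i+1)).sum + 1 := by
    intro i
    simp [incHead, List.take_succ_cons]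
    omega
  have hlen : (incHead (a :: t)).length = (a :: t).length := by simp [incHead]
  ext s
  simp only [mem_compSet, Finset.mem_image, hlen]
  constructor
  · rintro ⟨i, hi, rfl⟩
    exact ⟨((a::t).take (i+1)).sum, ⟨i, hi, rfl⟩, (key i).symm⟩
  · rintro ⟨x, ⟨i, hi, rfl⟩, rfl⟩
    exact ⟨i, hi, key i⟩

lemma decLast_append (m : List ℕ) (a : ℕ) : decLast (m ++ [a]) = m ++ [a - 1] := by
  simp [decLast]

lemma incHead_append (m : List ℕ) (hm : m ≠ []) (a : ℕ) :
    incHead (m ++ [a]) = incHead m ++ [a] := by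
  obtain ⟨b, t, rfl⟩ := List.exists_cons_of_ne_nil hm
  simp [incHead]

lemma compSet_append_singleton (m : List ℕ) (x y : ℕ) :
    compSet (m ++ [x]) = compSet (m ++ [y]) := by
  unfold compSet
  have hl : (m ++ [x]).length = (m ++ [y]).length := by simp
  rw [hl]
  apply Finset.image_congr
  intro i hi
  simp only [Finset.coe_range, Set.mem_Iio, List.length_append, List.length_cons,
    List.length_nil] at hi
  simp only
  rw [List.take_append_of_le_length (by omega), List.take_append_of_le_length (by omega)]

lemma pos_of_mem_incHead {m : List ℕ} (hm : ∀ a ∈ m, 0 < a) {x : ℕ}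
    (hx : x ∈ incHead m) : 0 < x := by
  cases m with
  | nil => simp [incHead] at hx
  | cons a t =>
    simp only [incHead, List.mem_cons] at hx
    rcases hx with rfl | h
    · omega
    · exact hm x (List.mem_cons_of_mem a h)

lemma compSet_short (l : List ℕ) (h : l.length ≤ 1) : compSet l = ∅ := by
  unfold compSet
  have : l.length - 1 = 0 := by omega
  rw [this]
  simp

lemma compSet_flatComp (a : ℕ) (t : List ℕ) (ht : t ≠ []) (ha : 2 ≤ a)
    (hpos : ∀ x ∈ t, 0 < x) :
    compSet (flatComp (a :: t)) =
      (compSet (a :: t)).image (fun s => (a :: t).sum - s + 1) := by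
  have hrev : (a :: t).reverse = t.reverse ++ [a] := by simp
  have htr : t.reverse ≠ [] := by simpa using ht
  have h1 : flatComp (a :: t) = incHead t.reverse ++ [a - 1] := by
    unfold flatComp
    rw [hrev, incHead_append _ htr, decLast_append]
    apply List.filter_eq_self.mpr
    intro x hx
    simp only [List.mem_append, List.mem_singleton] at hx
    rcases hx with h | rfl
    · simpa using pos_of_mem_incHead (fun y hy => hpos y (List.mem_reverse.mp hy)) h
    · simp; omega
  rw [h1, compSet_append_singleton _ _ a, ← incHead_append _ htr, ← hrev,
    compSet_incHead _ (by simp), compSet_reverse]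
  rw [Finset.image_image]
  rfl

/-- For a peak composition `α` of `n` and any composition `β` of `n`,
`I(α) ⊆ I(β) ∪ (I(β)+1)` if and only if `I(α♭) ⊆ I(βʳ) ∪ (I(βʳ)+1)`. -/
theorem flatComp_subset_iff (n : ℕ) (α β : List ℕ)
    (hαpos : ∀ a ∈ α, 0 < a) (hαsum : α.sum = n)
    (hαpeak : ∀ i : ℕ, i + 1 < α.length → 2 ≤ α.getD i 0)
    (hβpos : ∀ a ∈ β, 0 < a) (hβsum : β.sum = n) :
    compSet α ⊆ compSet β ∪ (compSet β).image (· + 1) ↔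
      compSet (flatComp α) ⊆
        compSet β.reverse ∪ (compSet β.reverse).image (· + 1) := by
  match α with
  | [] =>
    have h1 : compSet ([] : List ℕ) = ∅ := compSet_short _ (by simp)
    have h2 : flatComp [] = [] := rfl
    simp [h1, h2]
  | [a] =>
    have h1 : compSet [a] = ∅ := compSet_short _ (by simp)
    have hfa : flatComp [a] = [a].filter (fun x => 0 < x) := by
      unfold flatComp
      rw [show ([a] : List ℕ).reverse = [a] from rfl,
        show incHead [a] = [a + 1] from rfl,
        show ([a + 1] : List ℕ) = [] ++ [a + 1] from rfl, decLast_append]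
      norm_num
    have h2 : compSet (flatComp [a]) = ∅ := by
      apply compSet_short
      rw [hfa]
      calc (List.filter (fun x => 0 < x) [a]).length ≤ [a].length :=
            List.length_filter_le _ _
        _ = 1 := rfl
    simp [h1, h2]
  | a :: b :: t =>
    have ha : 2 ≤ a := by
      have := hαpeak 0 (by simp)
      simpa using this
    have htne : (b :: t : List ℕ) ≠ [] := by simp
    rw [compSet_flatComp a (b :: t) htne ha
      (fun x hx => hαpos x (List.mem_cons_of_mem a hx)), compSet_reverse β,
      hαsum, hβsum]
    have hA : ∀ s ∈ compSet (a :: b :: t), 0 < s ∧ s < n := fun s hs =>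
      hαsum ▸ compSet_bounds hαpos hs
    have hB : ∀ u ∈ compSet β, 0 < u ∧ u < n := fun u hu =>
      hβsum ▸ compSet_bounds hβpos hu
    constructor
    · intro h x hx
      simp only [Finset.mem_image] at hx
      obtain ⟨s, hsA, rfl⟩ := hx
      obtain ⟨hs0, hsn⟩ := hA s hsA
      have hm := h hsA
      simp only [Finset.mem_union, Finset.mem_image] at hm ⊢
      rcases hm with hsB | ⟨u, huB, rfl⟩
      · right
        exact ⟨n - s, ⟨s, hsB, rfl⟩, rfl⟩
      · left
        obtain ⟨hu0, hun⟩ := hB u huB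
        exact ⟨u, huB, by omega⟩
    · intro h s hsA
      obtain ⟨hs0, hsn⟩ := hA s hsA
      have hm := h (Finset.mem_image_of_mem _ hsA)
      simp only [Finset.mem_union, Finset.mem_image] at hm ⊢
      rcases hm with ⟨u, huB, hu⟩ | ⟨x, ⟨u, huB, rfl⟩, hu⟩
      · obtain ⟨hu0, hun⟩ := hB u huB
        right
        exact ⟨u, huB, by omega⟩
      · obtain ⟨hu0, hun⟩ := hB u huB
        left
        have : u = s := by omega
        rwa [this] at huB
end
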